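/- The expected energy consumption E of an IoT mobile device is convex in its own offloading vector: ConvexOn ℝ S₀ E holds, where E(α) = ε_loc·G(α) + ε_tx·H(α). -/

import Mathlib

/-! `E` depends on `α` only through the linear functional `s(α)`, so it suffices that the
one-variable profiles of `G` and `H` are convex on the half-lines cut out by `S₀`. There both are,
up to a nonnegative factor and an affine term, of the form `X² / Y` with `X`, `Y` affine, `Y > 0`:
  `G = (f / λ) · 1 / (f - (1 - s) λ c) - 1 / λ`,  `H = (λ S̄ r / 2) · s² / (r - λ z s) + (z / r) s`,
and `(x, y) ↦ x² / y` is jointly convex on `y > 0`. -/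

open Finset

noncomputable section

/-- Total offloading fraction `s(α) = Σ_j α_j`. -/
def sTot {N : ℕ} (α : Fin N → ℝ) : ℝ := ∑ j, α j

/-- Local computing delay contribution. -/
def Gfun {N : ℕ} (lam c f : ℝ) (α : Fin N → ℝ) : ℝ :=
  (1 - sTot α) * c / (f - (1 - sTot α) * lam * c)

/-- Wireless transmission delay contribution. -/
def Hfun {N : ℕ} (lam z r Sbar : ℝ) (α : Fin N → ℝ) : ℝ :=
  sTot α * (lam * Sbar * sTot α / (2 * (1 - lam * z * sTot α / r)) + z / r)

/-- Expected energy consumption `E(α) = ε_loc·G(α) + ε_tx·H(α)`. -/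
def Efun {N : ℕ} (lam c z r f Sbar εloc εtx : ℝ) (α : Fin N → ℝ) : ℝ :=
  εloc * Gfun lam c f α + εtx * Hfun lam z r Sbar α

/-- Basic feasible set `S₀`. -/
def S0 {N : ℕ} (lam c z r f : ℝ) : Set (Fin N → ℝ) :=
  {α | (∀ j, 0 ≤ α j) ∧ sTot α ≤ 1 ∧ (1 - sTot α) * lam * c < f ∧
    lam * z * sTot α < r}

theorem convexOn_sq_div : ConvexOn ℝ (Set.univ ×ˢ Set.Ioi 0) fun v : ℝ × ℝ => v.1 ^ 2 / v.2 := by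
  refine ⟨convex_univ.prod (convex_Ioi (0 : ℝ)), ?_⟩
  rintro ⟨x₁, y₁⟩ ⟨-, hy₁ : 0 < y₁⟩ ⟨x₂, y₂⟩ ⟨-, hy₂ : 0 < y₂⟩ p q hp hq -
  simp only [Prod.smul_mk, Prod.mk_add_mk, smul_eq_mul]
  rcases (add_nonneg (mul_nonneg hp hy₁.le) (mul_nonneg hq hy₂.le)).eq_or_lt with hw | hw
  · rw [← hw, div_zero]
    positivity
  · have defect :
        p * (x₁ ^ 2 / y₁) + q * (x₂ ^ 2 / y₂) - (p * x₁ + q * x₂) ^ 2 / (p * y₁ + q * y₂) =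
          p * q * (x₁ * y₂ - x₂ * y₁) ^ 2 / (y₁ * y₂ * (p * y₁ + q * y₂)) := by
      field_simp
      ring
    rw [← sub_nonneg, defect]
    positivity

theorem convexOn_sq_div_affine (a b c d : ℝ) :
    ConvexOn ℝ {x | 0 < a + b * x} fun x => (c + d * x) ^ 2 / (a + b * x) := by
  have hA (x : ℝ) : AffineMap.lineMap (c, a) (c + d, a + b) x = (c + d * x, a + b * x) := by
    ext <;> simp [AffineMap.lineMap_apply] <;> ring
  simpa only [Set.preimage, Function.comp_def, hA, Set.mem_prod, Set.mem_univ, true_and,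
    Set.mem_Ioi] using convexOn_sq_div.comp_affineMap (AffineMap.lineMap (c, a) (c + d, a + b))

def sTotₗ (N : ℕ) : (Fin N → ℝ) →ₗ[ℝ] ℝ where
  toFun := sTot
  map_add' x y := by simp [sTot, Finset.sum_add_distrib]
  map_smul' p x := by simp [sTot, Finset.mul_sum]

@[simp]
theorem sTotₗ_apply {N : ℕ} (α : Fin N → ℝ) : sTotₗ N α = sTot α := rfl

theorem convexOn_localDelay {lam c f : ℝ} (hlam : 0 < lam) (hf : 0 ≤ f) :
    ConvexOn ℝ {s | (1 - s) * lam * c < f} fun s => (1 - s) * c / (f - (1 - s) * lam * c) := by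
  have hdom : {s : ℝ | (1 - s) * lam * c < f} = {s | 0 < (f - lam * c) + lam * c * s} := by
    ext s
    rw [Set.mem_ofPred_eq, Set.mem_ofPred_eq]
    constructor <;> intro h <;> linear_combination h
  rw [hdom]
  refine (((convexOn_sq_div_affine (f - lam * c) (lam * c) 1 0).smul
    (c := f / lam) (by positivity)).add_const (-lam⁻¹)).congr fun s hs => ?_
  simp only [Pi.add_apply, smul_eq_mul]
  rw [show f - (1 - s) * lam * c = f - lam * c + lam * c * s by ring]
  set w := f - lam * c + lam * c * s with hw
  have hw0 : w ≠ 0 := ne_of_gt hs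
  field_simp
  rw [hw]
  ring

theorem convexOn_transmissionDelay {lam z r Sbar : ℝ} (hr : 0 < r) (hlS : 0 ≤ lam * Sbar) :
    ConvexOn ℝ {s | lam * z * s < r}
      fun s => s * (lam * Sbar * s / (2 * (1 - lam * z * s / r)) + z / r) := by
  have hdom : {s : ℝ | lam * z * s < r} = {s | 0 < r + -(lam * z) * s} := by
    ext s
    rw [Set.mem_ofPred_eq, Set.mem_ofPred_eq]
    constructor <;> intro h <;> linear_combination h
  rw [hdom]
  have hq := convexOn_sq_div_affine r (-(lam * z)) 0 1
  refine ((hq.smul (c := lam * Sbar * r / 2) (by positivity)).add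
    (LinearMap.convexOn (LinearMap.mul ℝ ℝ (z / r)) hq.1)).congr fun s hs => ?_
  have hw : r - lam * z * s ≠ 0 := by linarith [show 0 < r + -(lam * z) * s from hs]
  simp only [Pi.add_apply, smul_eq_mul, LinearMap.mul_apply']
  field_simp
  ring

theorem energy_convexOn_general (N : ℕ)
    (lam c z r f Sbar : ℝ) (hlam : 0 < lam) (hr : 0 < r)
    (hf : 0 < f) (hSbar : 0 < Sbar)
    (εloc εtx : ℝ) (hεloc : 0 ≤ εloc) (hεtx : 0 ≤ εtx) :
    ConvexOn ℝ (S0 (N := N) lam c z r f)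
      (Efun lam c z r f Sbar εloc εtx) := by
  have hG := convexOn_localDelay (c := c) hlam hf.le
  have hH := convexOn_transmissionDelay (z := z) hr (mul_pos hlam hSbar).le
  have hI := hG.1.inter hH.1
  have hE := (((hG.subset Set.inter_subset_left hI).smul hεloc).add
    ((hH.subset Set.inter_subset_right hI).smul hεtx)).comp_linearMap (sTotₗ N)
  have hS0 : S0 lam c z r f = Set.Ici 0 ∩
      sTotₗ N ⁻¹' (Set.Iic 1 ∩ ({s | (1 - s) * lam * c < f} ∩ {s | lam * z * s < r})) := by
    ext α
    simp [S0, Pi.le_def]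
  rw [hS0]
  exact hE.subset (Set.inter_subset_right.trans (Set.preimage_mono Set.inter_subset_right))
    ((convex_Ici 0).inter (((convex_Iic 1).inter hI).linear_preimage _))

/-- The expected energy consumption `E` is convex on the basic feasible set `S₀`. -/
theorem energy_convexOn (N : ℕ) (hN : 1 ≤ N)
    (lam c z r f Sbar : ℝ) (hlam : 0 < lam) (hc : 0 < c) (hz : 0 < z) (hr : 0 < r)
    (hf : 0 < f) (hSbar : 0 < Sbar)
    (εloc εtx : ℝ) (hεloc : 0 ≤ εloc) (hεtx : 0 ≤ εtx) :
    ConvexOn ℝ (S0 (N := N) lam c z r f)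
      (Efun lam c z r f Sbar εloc εtx) :=
  energy_convexOn_general N lam c z r f Sbar hlam hr hf hSbar εloc εtx hεloc hεtx

end
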